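/- arXiv:1910.08953 — 3 statements merged into one kernel-verified Lean document; each statement's English description precedes it below -/
import Mathlib

section
/- For the standard normal CDF Φ, the inequalities (1/2)·(1 + (1 − e^{−x²/2})^{1/2}) ≤ Φ(x) ≤ (1/2)·(1 + (1 − e^{−x²})^{1/2}) hold for all x ≥ 0. -/
open MeasureTheory ProbabilityTheory Real Set Filter Topology

/-! With `E x = ∫₀ˣ exp (-t²/2) dt` (`gaussPrimitive`) we have `Φ x = 1/2 + E x / √(2π)`, so
both bounds say that `(2/π) (E x)²` lies between `1 - exp (-x²/2)` and `1 - exp (-x²)`. In either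
case the difference `g` of the two sides vanishes at `0` and at `∞`, and `g'` is a positive factor
times a function `h` with `h 0 = 0` which increases up to some point and decreases after it. So
`h`, and with it `g'`, is first nonnegative and then nonpositive: `g` rises and then falls back to
its limit `0`, hence `g ≥ 0` on `[0, ∞)`. -/

lemma nonneg_on_Icc_or_nonpos_on_Ici {h : ℝ → ℝ} {a : ℝ} (h₀ : h 0 = 0)
    (hmono : MonotoneOn h (Icc 0 a)) (hanti : AntitoneOn h (Ici a)) (x : ℝ) :
    (∀ y ∈ Icc 0 x, 0 ≤ h y) ∨ ∀ y ∈ Ici x, h y ≤ 0 := by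
  rw [or_iff_not_imp_left]
  push Not
  rintro ⟨y, ⟨hy₀, hyx⟩, hy⟩ z (hxz : x ≤ z)
  have hay : a < y := by
    by_contra! hya
    exact hy.not_ge (h₀ ▸ hmono ⟨le_rfl, hy₀.trans hya⟩ ⟨hy₀, hya⟩ hy₀)
  exact (hanti hay.le (hay.le.trans (hyx.trans hxz)) (hyx.trans hxz)).trans hy.le

lemma nonneg_of_hasDerivAt_eq_mul_unimodal {g w h h' : ℝ → ℝ} {a : ℝ}
    (hg : ∀ x, HasDerivAt g (w x * h x) x) (hw : ∀ x, 0 ≤ w x)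
    (hg₀ : 0 ≤ g 0) (hg_lim : Tendsto g atTop (𝓝 0))
    (hh : ∀ x, HasDerivAt h (h' x) x) (hh₀ : h 0 = 0)
    (hh'_nonneg : ∀ x ∈ Ioo 0 a, 0 ≤ h' x) (hh'_nonpos : ∀ x ∈ Ioi a, h' x ≤ 0)
    {x : ℝ} (hx : 0 ≤ x) : 0 ≤ g x := by
  have hmono : MonotoneOn h (Icc 0 a) :=
    monotoneOn_of_hasDerivWithinAt_nonneg (convex_Icc 0 a)
      (fun y _ ↦ (hh y).continuousAt.continuousWithinAt) (fun y _ ↦ (hh y).hasDerivWithinAt)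
      (by rwa [interior_Icc])
  have hanti : AntitoneOn h (Ici a) :=
    antitoneOn_of_hasDerivWithinAt_nonpos (convex_Ici a)
      (fun y _ ↦ (hh y).continuousAt.continuousWithinAt) (fun y _ ↦ (hh y).hasDerivWithinAt)
      (by rwa [interior_Ici])
  rcases nonneg_on_Icc_or_nonpos_on_Ici hh₀ hmono hanti x with hpos | hneg
  · have : MonotoneOn g (Icc 0 x) :=
      monotoneOn_of_hasDerivWithinAt_nonneg (convex_Icc 0 x)
        (fun y _ ↦ (hg y).continuousAt.continuousWithinAt) (fun y _ ↦ (hg y).hasDerivWithinAt)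
        (fun y hy ↦ mul_nonneg (hw y) (hpos y (interior_subset hy)))
    exact hg₀.trans (this ⟨le_rfl, hx⟩ ⟨hx, le_rfl⟩ hx)
  · have : AntitoneOn g (Ici x) :=
      antitoneOn_of_hasDerivWithinAt_nonpos (convex_Ici x)
        (fun y _ ↦ (hg y).continuousAt.continuousWithinAt) (fun y _ ↦ (hg y).hasDerivWithinAt)
        (fun y hy ↦ mul_nonpos_of_nonneg_of_nonpos (hw y) (hneg y (interior_subset hy)))
    refine le_of_tendsto hg_lim ?_
    filter_upwards [eventually_ge_atTop x] with z hz
    exact this self_mem_Ici hz hz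

lemma exp_neg_sq_div_two (t : ℝ) : exp (-t ^ 2 / 2) = exp (-(1 / 2) * t ^ 2) := by
  ring_nf

lemma integrable_exp_neg_sq_div_two : Integrable fun t : ℝ ↦ exp (-t ^ 2 / 2) := by
  simpa only [exp_neg_sq_div_two] using integrable_exp_neg_mul_sq (b := 1 / 2) (by norm_num)

lemma integral_Ioi_exp_neg_sq_div_two : ∫ t in Ioi 0, exp (-t ^ 2 / 2) = √(2 * π) / 2 := by
  simp only [exp_neg_sq_div_two, integral_gaussian_Ioi]
  congr 2
  field_simp

lemma tendsto_exp_neg_sq_div_two_atTop : Tendsto (fun x : ℝ ↦ exp (-x ^ 2 / 2)) atTop (𝓝 0) := by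
  refine tendsto_exp_atBot.comp ?_
  simpa only [neg_div, Function.comp_def] using
    tendsto_neg_atTop_atBot.comp ((tendsto_pow_atTop two_ne_zero).atTop_div_const two_pos)

lemma hasDerivAt_exp_neg_sq_div_two (x : ℝ) :
    HasDerivAt (fun t ↦ exp (-t ^ 2 / 2)) (-x * exp (-x ^ 2 / 2)) x := by
  have : HasDerivAt (fun t : ℝ ↦ -t ^ 2 / 2) (-x) x :=
    ((hasDerivAt_pow 2 x).fun_neg.div_const 2).congr_deriv (by simp; ring)
  simpa [mul_comm] using this.exp

noncomputable def gaussPrimitive (x : ℝ) : ℝ := ∫ t in (0 : ℝ)..x, exp (-t ^ 2 / 2)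

lemma hasDerivAt_gaussPrimitive (x : ℝ) : HasDerivAt gaussPrimitive (exp (-x ^ 2 / 2)) x :=
  (Continuous.integral_hasStrictDerivAt (by fun_prop) 0 x).hasDerivAt

lemma gaussPrimitive_zero : gaussPrimitive 0 = 0 := intervalIntegral.integral_same

lemma gaussPrimitive_nonneg {x : ℝ} (hx : 0 ≤ x) : 0 ≤ gaussPrimitive x :=
  intervalIntegral.integral_nonneg hx fun _ _ ↦ (exp_pos _).le

lemma tendsto_two_div_pi_mul_gaussPrimitive_sq_atTop :
    Tendsto (fun x ↦ 2 / π * gaussPrimitive x ^ 2) atTop (𝓝 1) := by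
  have hlim : Tendsto gaussPrimitive atTop (𝓝 (√(2 * π) / 2)) := by
    rw [← integral_Ioi_exp_neg_sq_div_two]
    exact intervalIntegral_tendsto_integral_Ioi 0
      integrable_exp_neg_sq_div_two.integrableOn tendsto_id
  convert (hlim.pow 2).const_mul (2 / π) using 2
  rw [div_pow, sq_sqrt (by positivity)]
  field_simp

lemma one_sub_exp_neg_sq_div_two_le {x : ℝ} (hx : 0 ≤ x) :
    1 - exp (-x ^ 2 / 2) ≤ 2 / π * gaussPrimitive x ^ 2 := by
  have hg (y : ℝ) : HasDerivAt (fun t ↦ 2 / π * gaussPrimitive t ^ 2 - (1 - exp (-t ^ 2 / 2)))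
      (exp (-y ^ 2 / 2) * (4 / π * gaussPrimitive y - y)) y := by
    refine ((((hasDerivAt_gaussPrimitive y).pow 2).const_mul (2 / π)).sub
      ((hasDerivAt_const y 1).sub (hasDerivAt_exp_neg_sq_div_two y))).congr_deriv ?_
    push_cast
    ring
  have hh (y : ℝ) : HasDerivAt (fun t ↦ 4 / π * gaussPrimitive t - t)
      (exp (log (4 / π) - y ^ 2 / 2) - 1) y := by
    rw [sub_eq_add_neg (log _), exp_add, exp_log (by positivity), ← neg_div]
    exact ((hasDerivAt_gaussPrimitive y).const_mul _).sub (hasDerivAt_id y)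
  have hlim : Tendsto (fun t ↦ 2 / π * gaussPrimitive t ^ 2 - (1 - exp (-t ^ 2 / 2)))
      atTop (𝓝 0) := by
    simpa using tendsto_two_div_pi_mul_gaussPrimitive_sq_atTop.sub
      (tendsto_exp_neg_sq_div_two_atTop.const_sub 1)
  have hsign {y : ℝ} (hy : 0 < y) :
      0 ≤ exp (log (4 / π) - y ^ 2 / 2) - 1 ↔ y ≤ √(2 * log (4 / π)) := by
    rw [sub_nonneg, one_le_exp_iff, le_sqrt' hy]
    constructor <;> intro <;> linarith
  have := nonneg_of_hasDerivAt_eq_mul_unimodal hg (fun y ↦ (exp_pos _).le)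
    (by simp [gaussPrimitive_zero]) hlim hh (by simp [gaussPrimitive_zero])
    (fun y hy ↦ (hsign hy.1).2 hy.2.le)
    (fun y hy ↦ (not_le.1 ((hsign ((sqrt_nonneg _).trans_lt hy)).not.2 (not_le.2 hy))).le) hx
  linarith

lemma two_div_pi_mul_gaussPrimitive_sq_le {x : ℝ} (hx : 0 ≤ x) :
    2 / π * gaussPrimitive x ^ 2 ≤ 1 - exp (-x ^ 2) := by
  have hg (y : ℝ) : HasDerivAt (fun t ↦ 1 - exp (-t ^ 2 / 2) ^ 2 - 2 / π * gaussPrimitive t ^ 2)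
      (2 * exp (-y ^ 2 / 2) * (y * exp (-y ^ 2 / 2) - 2 / π * gaussPrimitive y)) y := by
    refine (((hasDerivAt_const y 1).sub ((hasDerivAt_exp_neg_sq_div_two y).pow 2)).sub
      (((hasDerivAt_gaussPrimitive y).pow 2).const_mul (2 / π))).congr_deriv ?_
    push_cast
    ring
  have hh (y : ℝ) : HasDerivAt (fun t ↦ t * exp (-t ^ 2 / 2) - 2 / π * gaussPrimitive t)
      (exp (-y ^ 2 / 2) * (1 - 2 / π - y ^ 2)) y := by
    refine (((hasDerivAt_id' y).mul (hasDerivAt_exp_neg_sq_div_two y)).sub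
      ((hasDerivAt_gaussPrimitive y).const_mul (2 / π))).congr_deriv ?_
    ring
  have hlim : Tendsto (fun t ↦ 1 - exp (-t ^ 2 / 2) ^ 2 - 2 / π * gaussPrimitive t ^ 2)
      atTop (𝓝 0) := by
    simpa using ((tendsto_exp_neg_sq_div_two_atTop.pow 2).const_sub 1).sub
      tendsto_two_div_pi_mul_gaussPrimitive_sq_atTop
  have hsign {y : ℝ} (hy : 0 < y) :
      0 ≤ exp (-y ^ 2 / 2) * (1 - 2 / π - y ^ 2) ↔ y ≤ √(1 - 2 / π) := by
    rw [mul_nonneg_iff_of_pos_left (exp_pos _), sub_nonneg, le_sqrt' hy]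
  have := nonneg_of_hasDerivAt_eq_mul_unimodal hg (fun y ↦ by positivity)
    (by simp [gaussPrimitive_zero]) hlim hh (by simp [gaussPrimitive_zero])
    (fun y hy ↦ (hsign hy.1).2 hy.2.le)
    (fun y hy ↦ (not_le.1 ((hsign ((sqrt_nonneg _).trans_lt hy)).not.2 (not_le.2 hy))).le) hx
  have hsq : exp (-x ^ 2) = exp (-x ^ 2 / 2) ^ 2 := by
    rw [← exp_nat_mul]
    ring_nf
  linarith

lemma gaussianPDFReal_zero_one (t : ℝ) :
    gaussianPDFReal 0 1 t = exp (-t ^ 2 / 2) / √(2 * π) := by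
  simp [gaussianPDFReal, div_eq_inv_mul]

lemma gaussianReal_Iic_toReal (x : ℝ) :
    (gaussianReal 0 1 (Iic x)).toReal = 1 / 2 + gaussPrimitive x / √(2 * π) := by
  have hpdf := integrable_gaussianPDFReal 0 1
  have h_half : ∫ t in Iic 0, gaussianPDFReal 0 1 t = 1 / 2 := by
    have := integral_comp_neg_Ioi 0 (gaussianPDFReal 0 1)
    simp only [neg_zero, gaussianPDFReal_zero_one, neg_sq, integral_div,
      integral_Ioi_exp_neg_sq_div_two] at this ⊢
    rw [← this]
    field_simp
  have h_interval : ∫ t in (0 : ℝ)..x, gaussianPDFReal 0 1 t = gaussPrimitive x / √(2 * π) := by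
    simp only [gaussianPDFReal_zero_one, intervalIntegral.integral_div, gaussPrimitive]
  rw [gaussianReal_apply_eq_integral 0 one_ne_zero, ENNReal.toReal_ofReal
    (setIntegral_nonneg measurableSet_Iic fun t _ ↦ gaussianPDFReal_nonneg 0 1 t)]
  linarith [intervalIntegral.integral_Iic_sub_Iic (a := 0) (b := x)
    hpdf.integrableOn hpdf.integrableOn]

/-- bounds (13.48) of Johnson–Kotz–Balakrishnan on the standard
normal CDF `Φ(x) = P[X ≤ x]`, `X ~ N(0,1)`, for `x ≥ 0`. -/
theorem stmt10 (x : ℝ) (hx : 0 ≤ x) :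
    1 / 2 * (1 + Real.sqrt (1 - Real.exp (-x ^ 2 / 2)))
        ≤ ((gaussianReal 0 1) (Set.Iic x)).toReal ∧
      ((gaussianReal 0 1) (Set.Iic x)).toReal
        ≤ 1 / 2 * (1 + Real.sqrt (1 - Real.exp (-x ^ 2))) := by
  rw [gaussianReal_Iic_toReal]
  set c := 2 * (gaussPrimitive x / √(2 * π))
  have hc_nonneg : 0 ≤ c := by have := gaussPrimitive_nonneg hx; positivity
  have hc_sq : c ^ 2 = 2 / π * gaussPrimitive x ^ 2 := by
    rw [mul_pow, div_pow, sq_sqrt (by positivity)]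
    field_simp
  have h_lower : √(1 - exp (-x ^ 2 / 2)) ≤ c :=
    sqrt_le_iff.2 ⟨hc_nonneg, hc_sq ▸ one_sub_exp_neg_sq_div_two_le hx⟩
  have h_upper : c ≤ √(1 - exp (-x ^ 2)) :=
    le_sqrt_of_sq_le (hc_sq ▸ two_div_pi_mul_gaussPrimitive_sq_le hx)
  constructor <;> linarith
end

section
/- Fix β ∈ [0,1) and N ≥ 2 a natural number. For x > 0, let μ₁(x) and μ_N(x) be the unique positive solutions of x + β − (1−β)μ = β^{μ+1} and x/N + β − (1−β)μ = β^{μ+1}, respectively. Then for every x > 0, μ₁(x)·(μ₁(x)+1) > N·μ_N(x)·(μ_N(x)+1). -/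
/-!
Write `f(μ) = β^(μ+1) - β + (1-β)μ`, so that `f(μ₁) = x` and `f(μ_N) = x/N`. As `f` is strictly
increasing with `f(0) = 0`, we get `μ_N < μ₁`, and the claim is `μ_N(μ_N+1)/f(μ_N) < μ₁(μ₁+1)/f(μ₁)`.
So it suffices that `μ(μ+1)/f(μ)` is strictly increasing on `(0, ∞)`. The numerator
`(2μ+1)f(μ) - μ(μ+1)f'(μ)` of its derivative vanishes at `β = 1`, and as a function of `β` it has
derivative `(μ+1)²(t(1 - log t) - 1)` with `t = β^μ ∈ (0,1)`, which is negative since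
`log t⁻¹ < t⁻¹ - 1`. Hence the numerator is positive for `β < 1`.
-/

open Real Set

noncomputable def rootFn (β μ : ℝ) : ℝ := β ^ (μ + 1) - β + (1 - β) * μ

lemma mul_one_sub_log_lt_one {t : ℝ} (ht0 : 0 < t) (ht1 : t ≠ 1) : t * (1 - log t) < 1 := by
  have h := log_lt_sub_one_of_pos (inv_pos.2 ht0) (inv_ne_one.2 ht1)
  rw [log_inv] at h
  have := mul_lt_mul_of_pos_left h ht0
  rw [mul_sub, mul_inv_cancel₀ ht0.ne'] at this
  linarith

lemma rootFn_zero_left {μ : ℝ} (hμ : 0 ≤ μ) : rootFn 0 μ = μ := by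
  simp [rootFn, zero_rpow (by linarith : μ + 1 ≠ 0)]

lemma hasDerivAt_rootFn {β : ℝ} (hβ : 0 < β) (μ : ℝ) :
    HasDerivAt (rootFn β) (β ^ (μ + 1) * log β + (1 - β)) μ := by
  have h := ((((hasDerivAt_id' μ).add_const 1).const_rpow hβ).sub_const β).add
    ((hasDerivAt_id' μ).const_mul (1 - β))
  exact h.congr_deriv (by ring)

lemma rootFn_deriv_pos {β μ : ℝ} (hβ0 : 0 < β) (hβ1 : β < 1) (hμ : 0 ≤ μ) :
    0 < β ^ (μ + 1) * log β + (1 - β) := by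
  have hpow : β ^ (μ + 1) ≤ β := by
    simpa using rpow_le_rpow_of_exponent_ge hβ0 hβ1.le (by linarith : (1 : ℝ) ≤ μ + 1)
  have hlog : log β < 0 := log_neg hβ0 hβ1
  have := mul_one_sub_log_lt_one hβ0 hβ1.ne
  nlinarith

lemma rootFn_strictMonoOn {β : ℝ} (hβ0 : 0 ≤ β) (hβ1 : β < 1) :
    StrictMonoOn (rootFn β) (Ici 0) := by
  rcases hβ0.eq_or_lt with rfl | hβ0
  · exact strictMonoOn_id.congr fun μ hμ => (rootFn_zero_left hμ).symm
  refine strictMonoOn_of_hasDerivWithinAt_pos (convex_Ici 0)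
    (fun μ _ => (hasDerivAt_rootFn hβ0 μ).continuousAt.continuousWithinAt)
    (fun μ _ => (hasDerivAt_rootFn hβ0 μ).hasDerivWithinAt) fun μ hμ => ?_
  rw [interior_Ici] at hμ
  exact rootFn_deriv_pos hβ0 hβ1 (le_of_lt hμ)

lemma rootFn_pos {β μ : ℝ} (hβ0 : 0 ≤ β) (hβ1 : β < 1) (hμ : 0 < μ) : 0 < rootFn β μ := by
  have h := rootFn_strictMonoOn hβ0 hβ1 self_mem_Ici hμ.le hμ
  simpa [rootFn] using h

lemma ratio_deriv_numerator_pos {β μ : ℝ} (hβ0 : 0 < β) (hβ1 : β < 1) (hμ : 0 < μ) :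
    0 < (2 * μ + 1) * rootFn β μ - μ * (μ + 1) * (β ^ (μ + 1) * log β + (1 - β)) := by
  set P : ℝ → ℝ := fun b =>
    (2 * μ + 1) * rootFn b μ - μ * (μ + 1) * (b ^ (μ + 1) * log b + (1 - b))
  have hP : ∀ b, 0 < b → HasDerivAt P ((μ + 1) ^ 2 * (b ^ μ * (1 - μ * log b) - 1)) b := by
    intro b hb
    have hpow : HasDerivAt (fun b : ℝ => b ^ (μ + 1)) ((μ + 1) * b ^ μ) b := by
      simpa using hasDerivAt_rpow_const (p := μ + 1) (Or.inl hb.ne')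
    have h := (((hpow.sub (hasDerivAt_id' b)).add ((hasDerivAt_const b (1 : ℝ)).sub
      (hasDerivAt_id' b) |>.mul_const μ)).const_mul (2 * μ + 1)).sub
      (((hpow.fun_mul (hasDerivAt_log hb.ne')).add ((hasDerivAt_const b (1 : ℝ)).sub
      (hasDerivAt_id' b))).const_mul (μ * (μ + 1)))
    refine h.congr_deriv ?_
    rw [rpow_add_one hb.ne']
    field_simp
    ring
  have hanti : StrictAntiOn P (Ioc 0 1) := by
    refine strictAntiOn_of_hasDerivWithinAt_neg (convex_Ioc 0 1)
      (fun b hb => (hP b hb.1).continuousAt.continuousWithinAt)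
      (fun b hb => (hP b (interior_subset hb).1).hasDerivWithinAt) fun b hb => ?_
    rw [interior_Ioc] at hb
    have hlt := mul_one_sub_log_lt_one (rpow_pos_of_pos hb.1 μ) (rpow_lt_one hb.1.le hb.2 hμ).ne
    rw [log_rpow hb.1] at hlt
    exact mul_neg_of_pos_of_neg (by positivity) (by linarith)
  have h := hanti ⟨hβ0, hβ1.le⟩ ⟨one_pos, le_rfl⟩ hβ1
  simpa [P, rootFn] using h

lemma strictMonoOn_mul_add_one_div_rootFn {β : ℝ} (hβ0 : 0 ≤ β) (hβ1 : β < 1) :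
    StrictMonoOn (fun μ => μ * (μ + 1) / rootFn β μ) (Ioi 0) := by
  rcases hβ0.eq_or_lt with rfl | hβ0
  · refine (strictMonoOn_id.add_const 1).congr fun μ (hμ : 0 < μ) => ?_
    simp [rootFn_zero_left hμ.le, hμ.ne']
  have hderiv : ∀ μ ∈ Ioi (0 : ℝ), HasDerivAt (fun μ => μ * (μ + 1) / rootFn β μ)
      (((2 * μ + 1) * rootFn β μ - μ * (μ + 1) * (β ^ (μ + 1) * log β + (1 - β)))
        / rootFn β μ ^ 2) μ := fun μ hμ =>
    (((hasDerivAt_id' μ).fun_mul ((hasDerivAt_id' μ).add_const 1)).div (hasDerivAt_rootFn hβ0 μ)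
      (rootFn_pos hβ0.le hβ1 hμ).ne').congr_deriv (by ring)
  refine strictMonoOn_of_hasDerivWithinAt_pos (convex_Ioi 0)
    (fun μ hμ => (hderiv μ hμ).continuousAt.continuousWithinAt)
    (fun μ hμ => (hderiv μ (interior_subset hμ)).hasDerivWithinAt) fun μ hμ => ?_
  rw [interior_Ioi] at hμ
  exact div_pos (ratio_deriv_numerator_pos hβ0 hβ1 hμ) (pow_pos (rootFn_pos hβ0.le hβ1 hμ) 2)

/-- with `β ∈ [0,1)` and `N ≥ 2`, the positive roots `μ₁, μ_N` of
`x + β − (1−β)μ = β^{μ+1}` and `x/N + β − (1−β)μ = β^{μ+1}` satisfy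
`μ₁(μ₁+1) > N·μ_N(μ_N+1)` for every `x > 0`. -/
theorem stmt13 (β : ℝ) (hβ0 : 0 ≤ β) (hβ1 : β < 1) (N : ℕ) (hN : 2 ≤ N) :
    ∀ x > (0:ℝ), ∀ μ1 μN : ℝ,
      0 < μ1 → x + β - (1 - β) * μ1 = β ^ (μ1 + 1) →
      0 < μN → x / N + β - (1 - β) * μN = β ^ (μN + 1) →
      N * μN * (μN + 1) < μ1 * (μ1 + 1) := by
  intro x hx μ1 μN hμ1 hroot1 hμN hrootN
  have hN1 : (1 : ℝ) < N := by exact_mod_cast hN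
  have hf1 : rootFn β μ1 = x := by rw [rootFn]; linarith
  have hfN : rootFn β μN = x / N := by rw [rootFn]; linarith
  have hlt : μN < μ1 := by
    refine (rootFn_strictMonoOn hβ0 hβ1).lt_iff_lt hμN.le hμ1.le |>.mp ?_
    rw [hf1, hfN]
    exact div_lt_self hx hN1
  have h := strictMonoOn_mul_add_one_div_rootFn hβ0 hβ1 hμN hμ1 hlt
  beta_reduce at h
  rw [hfN, hf1, div_div_eq_mul_div, div_lt_div_iff_of_pos_right hx] at h
  linarith
end

section
/- Let β ∈ (0,1), N ≥ 2, and for x > 0 let μ₁(x), μ_N(x) be the unique positive roots of x + β − (1−β)μ = β^{μ+1} and x/N + β − (1−β)μ = β^{μ+1}. Define q(x) = β·(1 + 1/μ_N(x))/(1 + 1/μ₁(x)). Then q(x) → β as x → ∞ and q(x) → βN as x → 0⁺. -/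
/-!
Write `g(μ) = β^(μ+1) + (1 - β)μ - β` (`xOfRoot β`), so that `μ₁(x)` solves `g(μ) = x` and `μ_N(x)` solves
`g(μ) = x / N`. As `β^(μ+1) ≤ β` for `μ ≥ 0`, `g(μ) ≤ (1 - β)μ`, so both roots tend to `∞` with `x`
and `q → β`. On the other side `exp t ≥ 1 + t` gives `g(μ) ≥ cμ` with `c = g'(0) = 1 - β + β log β > 0`,
so both roots tend to `0` as `x → 0⁺`; then `x / μ₁(x) → c` and `x / μ_N(x) → N c`, hence
`μ₁ / μ_N → N` and `q = β (μ₁ / μ_N) (μ_N + 1) / (μ₁ + 1) → β N`.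
-/

open Filter Topology Real

noncomputable def xOfRoot (β μ : ℝ) : ℝ := β ^ (μ + 1) + (1 - β) * μ - β

lemma one_sub_add_mul_log_pos {β : ℝ} (h0 : 0 < β) (h1 : β < 1) :
    0 < 1 - β + β * log β := by
  have h := log_lt_sub_one_of_pos (inv_pos.2 h0) (inv_ne_one.2 h1.ne)
  rw [log_inv] at h
  have := mul_lt_mul_of_pos_left h h0
  rw [mul_sub, mul_inv_cancel₀ h0.ne'] at this
  linarith

lemma xOfRoot_le {β μ : ℝ} (h0 : 0 < β) (h1 : β ≤ 1) (hμ : 0 ≤ μ) :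
    xOfRoot β μ ≤ (1 - β) * μ := by
  have : β ^ (μ + 1) ≤ β ^ (1 : ℝ) := rpow_le_rpow_of_exponent_ge h0 h1 (by linarith)
  rw [rpow_one] at this
  unfold xOfRoot
  linarith

lemma mul_le_xOfRoot {β : ℝ} (h0 : 0 < β) (μ : ℝ) :
    (1 - β + β * log β) * μ ≤ xOfRoot β μ := by
  have h := add_one_le_exp (log β * μ)
  rw [← rpow_def_of_pos h0] at h
  rw [xOfRoot, rpow_add_one h0.ne']
  nlinarith

lemma hasDerivAt_xOfRoot {β : ℝ} (h0 : 0 < β) :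
    HasDerivAt (xOfRoot β) (1 - β + β * log β) 0 := by
  have h := (((hasStrictDerivAt_const_rpow h0 0).hasDerivAt.mul_const β).add
    ((hasDerivAt_id 0).const_mul (1 - β))).sub_const β
  refine (h.congr_deriv (by simp; ring)).congr_of_eventuallyEq (.of_forall fun μ => ?_)
  simp [xOfRoot, rpow_add_one h0.ne']

lemma tendsto_xOfRoot_div {β : ℝ} (h0 : 0 < β) :
    Tendsto (fun μ => xOfRoot β μ / μ) (𝓝[>] 0) (𝓝 (1 - β + β * log β)) := by
  refine ((hasDerivAt_iff_tendsto_slope_left_right.1 (hasDerivAt_xOfRoot h0)).2).congr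
    fun μ => ?_
  simp [slope_def_field, xOfRoot]

section Root

variable {β k : ℝ} {m : ℝ → ℝ}
  (hm : ∀ x > (0 : ℝ), 0 < m x ∧ x / k + β - (1 - β) * m x = β ^ (m x + 1))
include hm

lemma xOfRoot_root {x : ℝ} (hx : 0 < x) : xOfRoot β (m x) = x / k := by
  have := (hm x hx).2
  unfold xOfRoot
  linarith

lemma tendsto_root_atTop (h0 : 0 < β) (h1 : β < 1) (hk : 0 < k) :
    Tendsto m atTop atTop := by
  refine tendsto_atTop_mono' _ ?_ ((tendsto_id.atTop_div_const hk).atTop_div_const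
    (sub_pos.2 h1))
  filter_upwards [eventually_gt_atTop 0] with x hx
  rw [id, div_le_iff₀ (sub_pos.2 h1), mul_comm, ← xOfRoot_root hm hx]
  exact xOfRoot_le h0 h1.le (hm x hx).1.le

lemma tendsto_root_nhdsGT (h0 : 0 < β) (h1 : β < 1) :
    Tendsto m (𝓝[>] 0) (𝓝[>] 0) := by
  have hc := one_sub_add_mul_log_pos h0 h1
  refine tendsto_nhdsWithin_iff.2 ⟨?_, eventually_nhdsWithin_of_forall fun x hx => (hm x hx).1⟩
  have hlim : Tendsto (fun x => x / k / (1 - β + β * log β)) (𝓝[>] 0) (𝓝 0) := by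
    simpa using ((continuous_id.div_const k).div_const _).tendsto' 0 _ (by simp)
      |>.mono_left nhdsWithin_le_nhds
  refine tendsto_of_tendsto_of_tendsto_of_le_of_le' tendsto_const_nhds hlim
    (eventually_nhdsWithin_of_forall fun x hx => (hm x hx).1.le)
    (eventually_nhdsWithin_of_forall fun x hx => ?_)
  rw [le_div_iff₀ hc, mul_comm, ← xOfRoot_root hm hx]
  exact mul_le_xOfRoot h0 _

lemma tendsto_div_root (h0 : 0 < β) (h1 : β < 1) (hk : k ≠ 0) :
    Tendsto (fun x => x / m x) (𝓝[>] 0) (𝓝 (k * (1 - β + β * log β))) := by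
  refine ((tendsto_xOfRoot_div h0).comp (tendsto_root_nhdsGT hm h0 h1)).const_mul k
    |>.congr' (eventually_nhdsWithin_of_forall fun x hx => ?_)
  simp only [Function.comp, xOfRoot_root hm hx]
  field_simp

end Root

lemma tendsto_root_div_root {β k l : ℝ} {m n : ℝ → ℝ} (h0 : 0 < β) (h1 : β < 1)
    (hk : k ≠ 0) (hl : l ≠ 0)
    (hm : ∀ x > (0 : ℝ), 0 < m x ∧ x / k + β - (1 - β) * m x = β ^ (m x + 1))
    (hn : ∀ x > (0 : ℝ), 0 < n x ∧ x / l + β - (1 - β) * n x = β ^ (n x + 1)) :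
    Tendsto (fun x => m x / n x) (𝓝[>] 0) (𝓝 (l / k)) := by
  have hc := (one_sub_add_mul_log_pos h0 h1).ne'
  have h := (tendsto_div_root hn h0 h1 hl).div (tendsto_div_root hm h0 h1 hk)
    (mul_ne_zero hk hc)
  rw [mul_div_mul_right _ _ hc] at h
  refine h.congr' (eventually_nhdsWithin_of_forall fun x hx => ?_)
  rw [Pi.div_apply]
  field_simp [(hm x hx).1.ne', (hn x hx).1.ne', (show x ≠ 0 from hx.ne')]

/-- with `q(x) = β(1 + 1/μ_N(x))/(1 + 1/μ₁(x))`, one has `q(x) → β`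
as `x → ∞` and `q(x) → βN` as `x → 0⁺`. -/
theorem stmt18 (β : ℝ) (hβ : β ∈ Set.Ioo (0:ℝ) 1) (N : ℕ) (hN : 2 ≤ N)
    (μ1 μN : ℝ → ℝ)
    (h1 : ∀ x > (0:ℝ), 0 < μ1 x ∧ x + β - (1 - β) * μ1 x = β ^ (μ1 x + 1))
    (hNr : ∀ x > (0:ℝ), 0 < μN x ∧ x / N + β - (1 - β) * μN x = β ^ (μN x + 1)) :
    Tendsto (fun x => β * (1 + 1 / μN x) / (1 + 1 / μ1 x)) atTop (𝓝 β) ∧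
      Tendsto (fun x => β * (1 + 1 / μN x) / (1 + 1 / μ1 x)) (𝓝[>] (0:ℝ))
        (𝓝 (β * N)) := by
  obtain ⟨hβ0, hβ1⟩ := hβ
  have hN0 : (0 : ℝ) < N := Nat.cast_pos.2 (by omega)
  have h1' : ∀ x > (0:ℝ), 0 < μ1 x ∧ x / 1 + β - (1 - β) * μ1 x = β ^ (μ1 x + 1) := by
    simpa only [div_one] using h1
  constructor
  · have hinvN := (tendsto_root_atTop hNr hβ0 hβ1 hN0).inv_tendsto_atTop.const_add 1
    have hinv1 := (tendsto_root_atTop h1' hβ0 hβ1 one_pos).inv_tendsto_atTop.const_add 1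
    simpa [Pi.div_def] using (hinvN.const_mul β).div hinv1 (by simp)
  · have hratio := tendsto_root_div_root hβ0 hβ1 one_ne_zero hN0.ne' h1' hNr
    have add_one {m : ℝ → ℝ} (hm : Tendsto m (𝓝[>] 0) (𝓝[>] 0)) :
        Tendsto (fun x => m x + 1) (𝓝[>] 0) (𝓝 (0 + 1)) :=
      (tendsto_nhds_of_tendsto_nhdsWithin hm).add_const 1
    have h : Tendsto (fun x => β * (μ1 x / μN x) * ((μN x + 1) / (μ1 x + 1))) (𝓝[>] 0)
        (𝓝 (β * (N / 1) * ((0 + 1) / (0 + 1)))) := (tendsto_const_nhds.mul hratio).mul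
      ((add_one (tendsto_root_nhdsGT hNr hβ0 hβ1)).div
        (add_one (tendsto_root_nhdsGT h1' hβ0 hβ1)) (by norm_num))
    rw [zero_add, div_one, div_one, mul_one] at h
    refine h.congr' (eventually_nhdsWithin_of_forall fun x hx => ?_)
    have := (h1 x hx).1
    have := (hNr x hx).1
    field_simp
end
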